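/- Let G be a group and let (U_g, ω) and (U'_g, ω') be projective unitary representations of G on ℂⁿ and ℂⁿ' respectively. Let (K_m)_{m∈ι} be a finite family of n'×n complex matrices with Σ_m K_mᴴ · K_m = 1ₙ, and let Λ(X) = Σ_m K_m · X · K_mᴴ be the associated quantum channel. Then Λ is (U,U')-strong covariant, i.e. Σ_m K_m · (U_g · X) · K_mᴴ = U'_g · (Σ_m K_m · X · K_mᴴ) for all g ∈ G and all n×n matrices X, if and only if K_m · U_g = U'_g · K_m for every m ∈ ι and every g ∈ G. -/
import Mathlib
open Matrix

lemma aux_sum_mul_conjTranspose_self_eq_zero {ι n n' : Type*} [Fintype ι] [Fintype n]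
    (T : ι → Matrix n' n ℂ) (h : ∑ m, T m * (T m)ᴴ = 0) (m : ι) : T m = 0 := by
  ext i j
  have hdiag := congrFun (congrFun h i) i
  simp only [Matrix.sum_apply, Matrix.mul_apply, Matrix.conjTranspose_apply,
    Matrix.zero_apply, Complex.star_def, Complex.mul_conj] at hdiag
  norm_cast at hdiag
  have h1 := (Finset.sum_eq_zero_iff_of_nonneg (fun m _ =>
    Finset.sum_nonneg fun k _ => Complex.normSq_nonneg _)).mp hdiag m (Finset.mem_univ m)
  have h2 := (Finset.sum_eq_zero_iff_of_nonneg (fun k _ =>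
    Complex.normSq_nonneg _)).mp h1 j (Finset.mem_univ j)
  simpa using Complex.normSq_eq_zero.mp h2

/-- **A quantum channel given by a Kraus family is strong covariant iff every Kraus
operator intertwines the two projective unitary representations.** -/
theorem kraus_strong_covariant_iff
    {G : Type*} [Group G] {n n' : ℕ} {ι : Type*} [Fintype ι]
    (U : G → Matrix (Fin n) (Fin n) ℂ) (ω : G → G → ℂ)
    (hUunit : ∀ g, (U g)ᴴ * U g = 1)
    (hUmul : ∀ g h, U g * U h = ω g h • U (g * h))
    (hUone : U 1 = 1)
    (U' : G → Matrix (Fin n') (Fin n') ℂ) (ω' : G → G → ℂ)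
    (hU'unit : ∀ g, (U' g)ᴴ * U' g = 1)
    (hU'mul : ∀ g h, U' g * U' h = ω' g h • U' (g * h))
    (hU'one : U' 1 = 1)
    (K : ι → Matrix (Fin n') (Fin n) ℂ)
    (hK : ∑ m, (K m)ᴴ * K m = 1) :
    (∀ (g : G) (X : Matrix (Fin n) (Fin n) ℂ),
        ∑ m, K m * (U g * X) * (K m)ᴴ = U' g * ∑ m, K m * X * (K m)ᴴ) ↔
      (∀ (m : ι) (g : G), K m * U g = U' g * K m) := by
  constructor
  · intro hcov m g
    have hgg : U g * (U g)ᴴ = 1 := mul_eq_one_comm.mp (hUunit g)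
    have hS1 : ∑ m, K m * (U g * (K m)ᴴ) = U' g * ∑ m, K m * (K m)ᴴ := by
      have := hcov g 1
      simpa [Matrix.mul_assoc] using this
    have hS2 : ∑ m, K m * ((U g)ᴴ * (K m)ᴴ) = (∑ m, K m * (K m)ᴴ) * (U' g)ᴴ := by
      have h := congrArg conjTranspose hS1
      simpa [conjTranspose_sum, conjTranspose_mul, Matrix.mul_assoc] using h
    have hS3 : ∑ m, K m * (K m)ᴴ = U' g * ((∑ m, K m * (K m)ᴴ) * (U' g)ᴴ) := by
      have h := hcov g (U g)ᴴ
      simp only [hgg] at h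
      calc ∑ m, K m * (K m)ᴴ = ∑ m, K m * 1 * (K m)ᴴ := by simp
        _ = U' g * ∑ m, K m * (U g)ᴴ * (K m)ᴴ := h
        _ = U' g * ∑ m, K m * ((U g)ᴴ * (K m)ᴴ) := by simp [Matrix.mul_assoc]
        _ = U' g * ((∑ m, K m * (K m)ᴴ) * (U' g)ᴴ) := by rw [hS2]
    have key : ∑ m, (K m * U g - U' g * K m) * (K m * U g - U' g * K m)ᴴ = 0 := by
      have expand : ∀ m, (K m * U g - U' g * K m) * (K m * U g - U' g * K m)ᴴ =
          K m * (K m)ᴴ - (K m * (U g * (K m)ᴴ)) * (U' g)ᴴ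
            - U' g * (K m * ((U g)ᴴ * (K m)ᴴ)) + U' g * ((K m * (K m)ᴴ) * (U' g)ᴴ) := by
        intro m
        simp only [conjTranspose_sub, conjTranspose_mul, Matrix.sub_mul, Matrix.mul_sub,
          Matrix.mul_assoc]
        rw [← Matrix.mul_assoc (U g) (U g)ᴴ (K m)ᴴ, hgg, Matrix.one_mul]
        abel
      rw [Finset.sum_congr rfl fun m _ => expand m]
      simp only [Finset.sum_sub_distrib, Finset.sum_add_distrib, ← Finset.sum_mul,
        ← Finset.mul_sum]
      rw [hS1, hS2, Matrix.mul_assoc (U' g) _ (U' g)ᴴ, ← hS3]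
      abel
    exact sub_eq_zero.mp (aux_sum_mul_conjTranspose_self_eq_zero _ key m)
  · intro h g X
    have hm : ∀ m : ι, K m * (U g * X) * (K m)ᴴ = U' g * (K m * X * (K m)ᴴ) := by
      intro m
      rw [← Matrix.mul_assoc, h m g, Matrix.mul_assoc, Matrix.mul_assoc, Matrix.mul_assoc]
    rw [Finset.sum_congr rfl fun m _ => hm m, ← Finset.mul_sum]
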